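/- Let 𝒞 be the fair-scheduler n-round abstract interactive channel with n ≥ 2, and let 𝕍 be a vulnerability measure satisfying the healthiness conditions. Let K be uniform on {0,1}, let Bob's strategy s_B always request the resource (h_i(t)=1 for all i,t), let Alice's strategy be s_0 (never request: g_i(t)=0) when K=0 and s_1 (always request: g_i(t)=1) when K=1. Then Bob's observed trace determines K with certainty: under K=0 Bob receives 1 at every round, while under K=1 Bob receives 0 at least once. Consequently the 𝕍-leakage of this attack is 𝕍(Ber(1)) − 𝕍(Ber(1/2)) > 0, and hence the fair scheduler has strictly positive classical 𝕍-capacity. -/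

import Mathlib

open scoped Classical

noncomputable section

/-- A probability vector (probability distribution) on a finite type. -/
def IsProbVector {α : Type} [Fintype α] (p : α → ℝ) : Prop :=
  (∀ a, 0 ≤ p a) ∧ ∑ a, p a = 1

/-- A vulnerability measure: a real-valued function on probability
distributions on finite types. -/
structure VulnMeasure : Type 1 where
  V : ∀ (α : Type) [Fintype α], (α → ℝ) → ℝ

/-- The Bernoulli distribution with parameter `ρ`, as a distribution on `Bool`. -/
def Ber (ρ : ℝ) : Bool → ℝ := fun b => if b then ρ else 1 - ρ

namespace VulnMeasure

variable (𝕍 : VulnMeasure)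

/-- `I_𝕍(X;Y)`: the expected increase in 𝕍-vulnerability of the posterior over
the prior, for a joint distribution `p` of `(X, Y)` on `α × β`. -/
def IV {α β : Type} [Fintype α] [Fintype β] (p : α × β → ℝ) : ℝ :=
  (∑ b : β, (∑ a : α, p (a, b)) * 𝕍.V α (fun a => p (a, b) / ∑ a' : α, p (a', b)))
    - 𝕍.V α (fun a => ∑ b : β, p (a, b))

/-- Healthiness condition (1): the composition inequality for Markov chains
`X → Y → Z` (specified by a prior `pX` and conditional kernels `q`, `r`). -/
def CompositionInequality : Prop :=
  ∀ (α β γ : Type) [Fintype α] [Fintype β] [Fintype γ]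
    (pX : α → ℝ) (q : α → β → ℝ) (r : β → γ → ℝ),
    IsProbVector pX → (∀ a, IsProbVector (q a)) → (∀ b, IsProbVector (r b)) →
    𝕍.IV (fun ac : α × γ => ∑ b : β, pX ac.1 * q ac.1 b * r b ac.2) ≤
        sSup {v | ∃ pX' : α → ℝ, IsProbVector pX' ∧
          v = 𝕍.IV fun ab : α × β => pX' ab.1 * q ab.1 ab.2} ∧
    𝕍.IV (fun ac : α × γ => ∑ b : β, pX ac.1 * q ac.1 b * r b ac.2) ≤
        sSup {v | ∃ pY' : β → ℝ, IsProbVector pY' ∧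
          v = 𝕍.IV fun bc : β × γ => pY' bc.1 * r bc.1 bc.2}

/-- Healthiness condition (2): Bernoulli distributions closer to uniform are
strictly less vulnerable. -/
def BerStrictMono : Prop :=
  ∀ ρ ρ' : ℝ, 0 ≤ ρ → ρ ≤ 1 → 0 ≤ ρ' → ρ' ≤ 1 →
    |ρ - 1 / 2| < |ρ' - 1 / 2| → 𝕍.V Bool (Ber ρ) < 𝕍.V Bool (Ber ρ')

/-- Healthiness condition (3): a binary symmetric channel with error
probability `p` leaks at most `𝕍(Ber(1-p)) - 𝕍(Ber(1/2))`. -/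
def BSCBound : Prop :=
  ∀ p : ℝ, 0 ≤ p → p ≤ 1 → ∀ pX : Bool → ℝ, IsProbVector pX →
    𝕍.IV (fun xy : Bool × Bool => pX xy.1 * (if xy.2 = xy.1 then 1 - p else p)) ≤
      𝕍.V Bool (Ber (1 - p)) - 𝕍.V Bool (Ber (1 / 2))

/-- The three healthiness conditions for a vulnerability measure. -/
def Healthy : Prop := 𝕍.CompositionInequality ∧ 𝕍.BerStrictMono ∧ 𝕍.BSCBound

end VulnMeasure

/-- Alice's view of a single round of a trace. -/
def viewA {A B X Y : Type} (e : A × B × X × Y) : A × X := (e.1, e.2.2.1)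

/-- Bob's view of a single round of a trace. -/
def viewB {A B X Y : Type} (e : A × B × X × Y) : B × Y := (e.2.1, e.2.2.2)

/-- An `n`-round abstract interactive channel (`n`-IC): at each round `i`,
given the history so far and the pair of messages sent by Alice and Bob, it
returns a probability distribution on the pair of messages sent back. -/
structure IC (n : ℕ) (A B X Y : Type) [Fintype X] [Fintype Y] where
  f : ∀ i : Fin n, (Fin i.val → A × B × X × Y) → A × B → X × Y → ℝ
  f_prob : ∀ i h ab, IsProbVector (f i h ab)

/-- The `i`-th prefix of a trace. -/
def prefixOf {n : ℕ} {α : Type} (t : Fin n → α) (i : Fin n) : Fin i.val → α :=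
  fun j => t ⟨j.val, lt_trans j.isLt i.isLt⟩

/-- Alice's view of the `i`-th prefix of a trace. -/
def aView {n : ℕ} {A B X Y : Type} (t : Fin n → A × B × X × Y) (i : Fin n) :
    Fin i.val → A × X := fun j => viewA (prefixOf t i j)

/-- Bob's view of the `i`-th prefix of a trace. -/
def bView {n : ℕ} {A B X Y : Type} (t : Fin n → A × B × X × Y) (i : Fin n) :
    Fin i.val → B × Y := fun j => viewB (prefixOf t i j)

/-- Bob's view of a whole trace. -/
def bobView {n : ℕ} {A B X Y : Type} (t : Fin n → A × B × X × Y) : Fin n → B × Y :=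
  fun i => viewB (t i)

/-- A classical (probabilistic) strategy for Alice. -/
structure AStrat (n : ℕ) (A X : Type) [Fintype A] where
  g : ∀ i : Fin n, (Fin i.val → A × X) → A → ℝ
  g_prob : ∀ i h, IsProbVector (g i h)

/-- A classical (probabilistic) strategy for Bob. -/
structure BStrat (n : ℕ) (B Y : Type) [Fintype B] where
  g : ∀ i : Fin n, (Fin i.val → B × Y) → B → ℝ
  g_prob : ∀ i h, IsProbVector (g i h)

variable {n : ℕ} {A B X Y : Type} [Fintype A] [Fintype B] [Fintype X] [Fintype Y]

/-- The probability contributed by the channel at round `i` of trace `t`. -/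
def chanStep (C : IC n A B X Y) (t : Fin n → A × B × X × Y) (i : Fin n) : ℝ :=
  C.f i (prefixOf t i) ((t i).1, (t i).2.1) ((t i).2.2.1, (t i).2.2.2)

/-- The probability of a trace under classical strategies for Alice and Bob. -/
def traceProb (C : IC n A B X Y) (sA : AStrat n A X) (sB : BStrat n B Y)
    (t : Fin n → A × B × X × Y) : ℝ :=
  ∏ i : Fin n, sA.g i (aView t i) (t i).1 * sB.g i (bView t i) (t i).2.1 * chanStep C t i

/-- The joint distribution of the secret and Bob's view of the trace, given a
prior `pK` on secrets and trace distributions `P k`. -/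
def bobJoint {K : Type} [Fintype K] (pK : K → ℝ)
    (P : K → (Fin n → A × B × X × Y) → ℝ) : K × (Fin n → B × Y) → ℝ :=
  fun kv => pK kv.1 * ∑ t : Fin n → A × B × X × Y, if bobView t = kv.2 then P kv.1 t else 0

/-- The 𝕍-leakage to Bob : the expected posterior 𝕍-vulnerability of the
secret given Bob's view, minus the prior vulnerability. -/
def leakage (𝕍 : VulnMeasure) {K : Type} [Fintype K] (pK : K → ℝ)
    (P : K → (Fin n → A × B × X × Y) → ℝ) : ℝ :=
  𝕍.IV (bobJoint pK P)

/-- A secret: a finite set together with a prior probability distribution. -/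
structure Secret : Type 1 where
  K : Type
  [fin : Fintype K]
  p : K → ℝ
  prob : IsProbVector p

attribute [instance] Secret.fin

/-- The classical 𝕍-capacity of a channel: the supremum of 𝕍-leakage over all
secrets and all classical strategies. -/
def classicalCapacity (𝕍 : VulnMeasure) (C : IC n A B X Y) : ℝ :=
  sSup {r | ∃ (s : Secret) (φA : s.K → AStrat n A X) (sB : BStrat n B Y),
    r = leakage 𝕍 s.p fun k => traceProb C (φA k) sB}

/-- An orthogonal projective measurement with outcomes in `O` on `ℂ^d`. -/
structure ProjMeas (d : ℕ) (O : Type) [Fintype O] where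
  P : O → Matrix (Fin d) (Fin d) ℂ
  herm : ∀ o, (P o).IsHermitian
  idem : ∀ o, P o * P o = P o
  orth : ∀ o o', o ≠ o' → P o * P o' = 0
  complete : ∑ o, P o = 1

/-- A quantum joint strategy: a shared entangled state on `ℂ^{dA} ⊗ ℂ^{dB}`,
projective measurements for Alice (depending on the secret and her view) and
for Bob (depending on his view). -/
structure QStrat (n : ℕ) (K A B X Y : Type) [Fintype A] [Fintype B] where
  dA : ℕ
  dB : ℕ
  ψ : Fin dA × Fin dB → ℂ
  unit : ∑ q, Complex.normSq (ψ q) = 1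
  Am : ∀ (k : K) (i : Fin n), (Fin i.val → A × X) → ProjMeas dA A
  Bm : ∀ (i : Fin n), (Fin i.val → B × Y) → ProjMeas dB B

/-- The ordered product `A^k_h` of Alice's projections along a history `h` of
length `m` (later rounds act on the left). -/
def aliceHistProd {K : Type} (S : QStrat n K A B X Y) (k : K) {m : ℕ} (hm : m ≤ n)
    (h : Fin m → A × B × X × Y) : Matrix (Fin S.dA) (Fin S.dA) ℂ :=
  (((List.finRange m).map fun i =>
      (S.Am k ⟨i.val, lt_of_lt_of_le i.isLt hm⟩
          (fun j => viewA (h ⟨j.val, lt_trans j.isLt i.isLt⟩))).P (h i).1).reverse).prod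

/-- The ordered product `B_h` of Bob's projections along a history `h`. -/
def bobHistProd {K : Type} (S : QStrat n K A B X Y) {m : ℕ} (hm : m ≤ n)
    (h : Fin m → A × B × X × Y) : Matrix (Fin S.dB) (Fin S.dB) ℂ :=
  (((List.finRange m).map fun i =>
      (S.Bm ⟨i.val, lt_of_lt_of_le i.isLt hm⟩
          (fun j => viewB (h ⟨j.val, lt_trans j.isLt i.isLt⟩))).P (h i).2.1).reverse).prod

/-- `⟨ψ|A^k_t ⊗ B_t|ψ⟩` for a full trace `t`. -/
def qPath {K : Type} (S : QStrat n K A B X Y) (k : K) (t : Fin n → A × B × X × Y) : ℝ :=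
  (dotProduct (star S.ψ)
    ((Matrix.kroneckerMap (· * ·) (aliceHistProd S k le_rfl t)
        (bobHistProd S le_rfl t)).mulVec S.ψ)).re

/-- The probability of a trace under a quantum joint strategy. -/
def qTraceProb (C : IC n A B X Y) {K : Type} (S : QStrat n K A B X Y) (k : K)
    (t : Fin n → A × B × X × Y) : ℝ :=
  qPath S k t * ∏ i : Fin n, chanStep C t i

/-- The entangled 𝕍-capacity of a channel: the supremum of 𝕍-leakage over all
secrets and all quantum joint strategies. -/
def entCapacity (𝕍 : VulnMeasure) (C : IC n A B X Y) : ℝ :=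
  sSup {r | ∃ (s : Secret) (S : QStrat n s.K A B X Y),
    r = leakage 𝕍 s.p fun k => qTraceProb C S k}

/-- A generalised strategy: a joint (correlated) probabilistic strategy for
Alice and Bob, possibly depending on the secret. -/
structure GenStrat (n : ℕ) (K A B X Y : Type) [Fintype A] [Fintype B] where
  g : ∀ (k : K) (i : Fin n), (Fin i.val → A × B × X × Y) → A × B → ℝ
  g_prob : ∀ k i h, IsProbVector (g k i h)

/-- The non-signalling conditions for a generalised strategy. -/
def GenStrat.NonSignalling {K : Type} (S : GenStrat n K A B X Y) : Prop :=
  (∀ (k k' : K) (i : Fin n) (h h' : Fin i.val → A × B × X × Y),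
      (fun j => viewB (h j)) = (fun j => viewB (h' j)) →
      ∀ b : B, ∑ a : A, S.g k i h (a, b) = ∑ a : A, S.g k' i h' (a, b)) ∧
  (∀ (k : K) (i : Fin n) (h h' : Fin i.val → A × B × X × Y),
      (fun j => viewA (h j)) = (fun j => viewA (h' j)) →
      ∀ a : A, ∑ b : B, S.g k i h (a, b) = ∑ b : B, S.g k i h' (a, b))

/-- The probability of a trace under a generalised strategy. -/
def genTraceProb (C : IC n A B X Y) {K : Type} (S : GenStrat n K A B X Y) (k : K)
    (t : Fin n → A × B × X × Y) : ℝ :=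
  ∏ i : Fin n, S.g k i (prefixOf t i) ((t i).1, (t i).2.1) * chanStep C t i

/-- The non-signalling 𝕍-capacity of a channel: the supremum of 𝕍-leakage over
all secrets and all non-signalling generalised strategies. -/
def nsCapacity (𝕍 : VulnMeasure) (C : IC n A B X Y) : ℝ :=
  sSup {r | ∃ (s : Secret) (S : GenStrat n s.K A B X Y), S.NonSignalling ∧
    r = leakage 𝕍 s.p fun k => genTraceProb C S k}


/-- The point distribution at `a`. -/
def pt {α : Type} [Fintype α] (a : α) : α → ℝ := fun x => if x = a then 1 else 0

lemma isProbVector_pt {α : Type} [Fintype α] (a : α) : IsProbVector (pt a) := by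
  constructor
  · intro x; unfold pt; split_ifs <;> norm_num
  · unfold pt; simp

lemma isProbVector_fairCoin :
    IsProbVector (fun xy : Bool × Bool =>
      if xy = (true, false) then (1 : ℝ) / 2 else if xy = (false, true) then 1 / 2 else 0) := by
  constructor
  · intro xy; dsimp only; split_ifs <;> norm_num
  · rw [Fintype.sum_prod_type]
    simp only [Fintype.sum_bool]
    norm_num

/-- The fair resource scheduler: if only one of Alice and Bob requests the
resource they get it; if both request it, it goes to whoever has received it
fewer times so far (with a fair coin flip to break ties). -/
def fairSched (n : ℕ) : IC n Bool Bool Bool Bool where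
  f := fun _ h ab xy =>
    if ab = (true, false) then pt ((true, false) : Bool × Bool) xy
    else if ab = (false, true) then pt ((false, true) : Bool × Bool) xy
    else if ab = (false, false) then pt ((false, false) : Bool × Bool) xy
    else
      if (Finset.univ.filter fun j => (h j).2.2.1 = true).card <
          (Finset.univ.filter fun j => (h j).2.2.2 = true).card then
        pt ((true, false) : Bool × Bool) xy
      else if (Finset.univ.filter fun j => (h j).2.2.2 = true).card <
          (Finset.univ.filter fun j => (h j).2.2.1 = true).card then
        pt ((false, true) : Bool × Bool) xy
      else if xy = (true, false) then (1 : ℝ) / 2 else if xy = (false, true) then 1 / 2 else 0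
  f_prob := by
    intro i h ab
    try dsimp only
    split_ifs <;> first
      | exact isProbVector_pt _
      | exact isProbVector_fairCoin

/-- The constant strategy for Alice that always sends `v`. -/
def alwaysA (n : ℕ) (v : Bool) : AStrat n Bool Bool where
  g := fun _ _ => pt v
  g_prob := fun _ _ => isProbVector_pt v

/-- The constant strategy for Bob that always sends `v`. -/
def alwaysB (n : ℕ) (v : Bool) : BStrat n Bool Bool where
  g := fun _ _ => pt v
  g_prob := fun _ _ => isProbVector_pt v

/-!
Under `K = 0` Alice never requests, so Bob, who always requests, is served in every round.
Under `K = 1` both always request: the first round cannot serve both, so if Bob is served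
there, Alice has been served fewer times at the start of the second round and gets the
resource in it. Hence Bob's view separates the two secrets, every posterior is `Ber 0` or
`Ber 1`, and the leakage is `𝕍(Ber 1) - 𝕍(Ber (1/2))`, positive because `Ber 1` is further from
uniform than `Ber (1/2)`.

That `𝕍(Ber 0) = 𝕍(Ber 1)` comes from the BSC bound: under a uniform prior the binary symmetric
channels with error `0` and `1` both leak `(𝕍(Ber 0) + 𝕍(Ber 1)) / 2 - 𝕍(Ber (1/2))`, and they
are bounded by `𝕍(Ber 1) - 𝕍(Ber (1/2))` and `𝕍(Ber 0) - 𝕍(Ber (1/2))` respectively. The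
capacity, a supremum, is bounded above because the composition inequality compares every
leakage with that of an identity channel.
-/

theorem prefixOf_snoc_castSucc {m : ℕ} {α : Type} (s : Fin m → α) (a : α) (i : Fin m) :
    prefixOf (Fin.snoc s a : Fin (m + 1) → α) i.castSucc = prefixOf s i := by
  funext j
  simp [prefixOf, Fin.snoc, j.isLt.trans i.isLt]

theorem prefixOf_snoc_last {m : ℕ} {α : Type} (s : Fin m → α) (a : α) :
    prefixOf (Fin.snoc s a : Fin (m + 1) → α) (Fin.last m) = s := by
  funext j
  simp [prefixOf, Fin.snoc]

theorem sum_prod_prefixOf_eq_one {α : Type} [Fintype α] :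
    ∀ {m : ℕ} (p : ∀ i : Fin m, (Fin i.val → α) → α → ℝ), (∀ i h, ∑ a, p i h a = 1) →
      ∑ t : Fin m → α, ∏ i, p i (prefixOf t i) (t i) = 1
  | 0, _, _ => by simp
  | m + 1, p, hp => by
    have snoc_eq (a : α) (s : Fin m → α) : Fin.snocEquiv (fun _ => α) (a, s) = Fin.snoc s a := rfl
    rw [← (Fin.snocEquiv fun _ => α).sum_comp, Fintype.sum_prod_type, Finset.sum_comm]
    simp only [snoc_eq, Fin.prod_univ_castSucc, prefixOf_snoc_castSucc,
      prefixOf_snoc_last, Fin.snoc_castSucc, Fin.snoc_last, ← Finset.mul_sum, hp, mul_one]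
    exact sum_prod_prefixOf_eq_one (fun i => p i.castSucc) fun i => hp i.castSucc

def roundDist (C : IC n A B X Y) (sA : AStrat n A X) (sB : BStrat n B Y) (i : Fin n)
    (h : Fin i.val → A × B × X × Y) (e : A × B × X × Y) : ℝ :=
  sA.g i (fun j => viewA (h j)) e.1 * sB.g i (fun j => viewB (h j)) e.2.1 *
    C.f i h (e.1, e.2.1) (e.2.2.1, e.2.2.2)

section Trace

variable (C : IC n A B X Y) (sA : AStrat n A X) (sB : BStrat n B Y)

theorem isProbVector_roundDist (i : Fin n) (h : Fin i.val → A × B × X × Y) :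
    IsProbVector (roundDist C sA sB i h) := by
  refine ⟨fun e => mul_nonneg (mul_nonneg ((sA.g_prob _ _).1 _) ((sB.g_prob _ _).1 _))
    ((C.f_prob _ _ _).1 _), ?_⟩
  have hC (a : A) (b : B) : ∑ x, ∑ y, C.f i h (a, b) (x, y) = 1 := by
    rw [← Fintype.sum_prod_type']
    exact (C.f_prob i h (a, b)).2
  simp only [roundDist, Fintype.sum_prod_type, ← Finset.mul_sum, hC, mul_one,
    (sB.g_prob _ _).2, (sA.g_prob _ _).2]

theorem traceProb_eq_prod_roundDist (t : Fin n → A × B × X × Y) :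
    traceProb C sA sB t = ∏ i, roundDist C sA sB i (prefixOf t i) (t i) := rfl

theorem isProbVector_traceProb : IsProbVector (traceProb C sA sB) := by
  simp only [IsProbVector, traceProb_eq_prod_roundDist]
  exact ⟨fun t => Finset.prod_nonneg fun i _ => (isProbVector_roundDist C sA sB i _).1 _,
    sum_prod_prefixOf_eq_one _ fun i h => (isProbVector_roundDist C sA sB i h).2⟩

theorem traceProb_ne_zero_iff (t : Fin n → A × B × X × Y) :
    traceProb C sA sB t ≠ 0 ↔ ∀ i, sA.g i (aView t i) (t i).1 ≠ 0 ∧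
      sB.g i (bView t i) (t i).2.1 ≠ 0 ∧ chanStep C t i ≠ 0 := by
  simp only [traceProb, Finset.prod_ne_zero_iff, Finset.mem_univ, true_implies, ne_eq,
    mul_eq_zero, not_or, and_assoc]

end Trace

def bobViewDist (P : (Fin n → A × B × X × Y) → ℝ) (v : Fin n → B × Y) : ℝ :=
  ∑ t, if bobView t = v then P t else 0

theorem bobJoint_eq {K : Type} [Fintype K] (pK : K → ℝ) (P : K → (Fin n → A × B × X × Y) → ℝ) :
    bobJoint pK P = fun kv => pK kv.1 * bobViewDist (P kv.1) kv.2 := rfl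

theorem isProbVector_bobViewDist {P : (Fin n → A × B × X × Y) → ℝ} (hP : IsProbVector P) :
    IsProbVector (bobViewDist P) := by
  refine ⟨fun v => Finset.sum_nonneg fun t _ => ?_, ?_⟩
  · split_ifs
    exacts [hP.1 t, le_rfl]
  · simp only [bobViewDist]
    rw [Finset.sum_comm]
    simpa using hP.2

theorem bobViewDist_eq_zero {P : (Fin n → A × B × X × Y) → ℝ} {v : Fin n → B × Y}
    (h : ∀ t, bobView t = v → P t = 0) : bobViewDist P v = 0 :=
  Finset.sum_eq_zero fun t _ => ite_eq_right_iff.2 (h t)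

theorem eq_Ber {g : Bool → ℝ} {ρ : ℝ} (h1 : g true = ρ) (h0 : g false = 1 - ρ) : g = Ber ρ := by
  funext b
  cases b <;> simpa [Ber]

theorem Ber_half : Ber (1 / 2) = fun _ => 1 / 2 := by
  funext b
  cases b <;> norm_num [Ber]

namespace VulnMeasure

variable (𝕍 : VulnMeasure)

theorem IV_uniform_BSC (p : ℝ) :
    𝕍.IV (fun xy : Bool × Bool => (fun _ : Bool => (1 : ℝ) / 2) xy.1 *
        (if xy.2 = xy.1 then 1 - p else p)) =
      1 / 2 * 𝕍.V Bool (Ber (1 - p)) + 1 / 2 * 𝕍.V Bool (Ber p) - 𝕍.V Bool (Ber (1 / 2)) := by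
  have hmass (b : Bool) : ∑ a : Bool, 1 / 2 * (if b = a then 1 - p else p) = (1 / 2 : ℝ) := by
    cases b <;> norm_num [Fintype.sum_bool] <;> ring
  simp only [IV, hmass, Fintype.sum_bool]
  congr 4 <;> apply eq_Ber <;> norm_num <;> ring

theorem V_Ber_zero_eq_V_Ber_one (hB : 𝕍.BSCBound) : 𝕍.V Bool (Ber 0) = 𝕍.V Bool (Ber 1) := by
  have huniform : IsProbVector fun _ : Bool => (1 : ℝ) / 2 :=
    ⟨fun _ => by norm_num, by norm_num [Fintype.sum_bool]⟩
  have h0 := hB 0 le_rfl zero_le_one _ huniform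
  have h1 := hB 1 zero_le_one le_rfl _ huniform
  rw [IV_uniform_BSC, sub_zero] at h0
  rw [IV_uniform_BSC, sub_self] at h1
  linarith

theorem IV_eq_of_disjoint_support (h01 : 𝕍.V Bool (Ber 0) = 𝕍.V Bool (Ber 1)) {β : Type}
    [Fintype β] {pK : Bool → ℝ} (hpK : ∑ k, pK k = 1) {q : Bool → β → ℝ}
    (hq : ∀ k, ∑ b, q k b = 1) (hdisj : ∀ b, q true b = 0 ∨ q false b = 0) :
    𝕍.IV (fun kb : Bool × β => pK kb.1 * q kb.1 kb.2) = 𝕍.V Bool (Ber 1) - 𝕍.V Bool pK := by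
  have hprior : (fun k => ∑ b, pK k * q k b) = pK := by
    funext k
    rw [← Finset.mul_sum, hq, mul_one]
  have hpost (b : β) : (∑ k, pK k * q k b) * 𝕍.V Bool (fun k => pK k * q k b / ∑ k', pK k' * q k' b)
      = (∑ k, pK k * q k b) * 𝕍.V Bool (Ber 1) := by
    rcases eq_or_ne (∑ k, pK k * q k b) 0 with hzero | hne
    · rw [hzero, zero_mul, zero_mul]
    rw [Fintype.sum_bool] at hne ⊢
    congr 1
    rcases hdisj b with h | h <;> simp only [h, mul_zero, zero_add, add_zero] at hne ⊢
    · rw [← h01]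
      congr 1
      exact eq_Ber (by simp [h]) (by simp [div_self hne])
    · congr 1
      exact eq_Ber (by simp [div_self hne]) (by simp [h])
  have hmass : ∑ b, ∑ k, pK k * q k b = 1 := by
    rw [Finset.sum_comm]
    simpa [← Finset.mul_sum, hq] using hpK
  simp only [IV, hpost, ← Finset.sum_mul, hmass, one_mul, hprior]

theorem IV_le_sSup_IV_id (hcomp : 𝕍.CompositionInequality) {α β : Type} [Fintype α] [Fintype β]
    {pX : α → ℝ} (hpX : IsProbVector pX) {q : α → β → ℝ} (hq : ∀ a, IsProbVector (q a)) :
    𝕍.IV (fun ab : α × β => pX ab.1 * q ab.1 ab.2) ≤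
      sSup {v | ∃ pY : β → ℝ, IsProbVector pY ∧
        v = 𝕍.IV fun bb : β × β => pY bb.1 * pt bb.1 bb.2} := by
  have h := (hcomp α β β pX q pt hpX hq isProbVector_pt).2
  simpa [pt] using h

end VulnMeasure

theorem le_classicalCapacity (𝕍 : VulnMeasure) (hcomp : 𝕍.CompositionInequality)
    (C : IC n A B X Y) (s : Secret) (φA : s.K → AStrat n A X) (sB : BStrat n B Y) :
    leakage 𝕍 s.p (fun k => traceProb C (φA k) sB) ≤ classicalCapacity 𝕍 C := by
  refine le_csSup ⟨?_, fun _ hr => ?_⟩ ⟨s, φA, sB, rfl⟩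
  swap
  obtain ⟨s', φA', sB', rfl⟩ := hr
  exact 𝕍.IV_le_sSup_IV_id hcomp s'.prob (q := fun k => bobViewDist (traceProb C (φA' k) sB'))
    fun k => isProbVector_bobViewDist (isProbVector_traceProb C (φA' k) sB')

theorem alwaysA_g_ne_zero_iff {i : Fin n} {h : Fin i.val → Bool × Bool} {v a : Bool} :
    (alwaysA n v).g i h a ≠ 0 ↔ a = v := by
  simp [alwaysA, pt]

theorem alwaysB_g_ne_zero_iff {i : Fin n} {h : Fin i.val → Bool × Bool} {v b : Bool} :
    (alwaysB n v).g i h b ≠ 0 ↔ b = v := by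
  simp [alwaysB, pt]

theorem fairSched_f_false_true (i : Fin n) (h : Fin i.val → Bool × Bool × Bool × Bool) :
    (fairSched n).f i h (false, true) = pt (false, true) := by
  simp [fairSched]

theorem fairSched_f_true_true_apply_true_true (i : Fin n)
    (h : Fin i.val → Bool × Bool × Bool × Bool) :
    (fairSched n).f i h (true, true) (true, true) = 0 := by
  simp [fairSched, pt]

theorem fairSched_f_true_true_of_lt (i : Fin n) (h : Fin i.val → Bool × Bool × Bool × Bool)
    (hlt : (Finset.univ.filter fun j => (h j).2.2.1 = true).card <
      (Finset.univ.filter fun j => (h j).2.2.2 = true).card) :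
    (fairSched n).f i h (true, true) = pt (true, false) := by
  simp [fairSched, hlt]

theorem fairSched_bob_served_of_alice_never {t : Fin n → Bool × Bool × Bool × Bool}
    (ht : traceProb (fairSched n) (alwaysA n false) (alwaysB n true) t ≠ 0) (i : Fin n) :
    (t i).2.2.2 = true := by
  obtain ⟨ha, hb, hC⟩ := (traceProb_ne_zero_iff _ _ _ t).1 ht i
  rw [chanStep, alwaysA_g_ne_zero_iff.1 ha, alwaysB_g_ne_zero_iff.1 hb,
    fairSched_f_false_true] at hC
  simp only [pt, ne_eq, ite_eq_right_iff, one_ne_zero, imp_false, not_not,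
    Prod.mk.injEq] at hC
  exact hC.2

theorem fairSched_exists_bob_denied_of_alice_always (hn : 2 ≤ n)
    {t : Fin n → Bool × Bool × Bool × Bool}
    (ht : traceProb (fairSched n) (alwaysA n true) (alwaysB n true) t ≠ 0) :
    ∃ i, (t i).2.2.2 = false := by
  by_contra! hy
  simp only [ne_eq, Bool.not_eq_false] at hy
  have hround := (traceProb_ne_zero_iff _ _ _ t).1 ht
  have hreq (i : Fin n) : (t i).1 = true ∧ (t i).2.1 = true :=
    ⟨alwaysA_g_ne_zero_iff.1 (hround i).1, alwaysB_g_ne_zero_iff.1 (hround i).2.1⟩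
  have hx (i : Fin n) : (t i).2.2.1 = false := by
    by_contra! hxi
    apply (hround i).2.2
    rw [chanStep, (hreq i).1, (hreq i).2, Bool.eq_true_of_not_eq_false hxi, hy i]
    exact fairSched_f_true_true_apply_true_true _ _
  let i₁ : Fin n := ⟨1, hn⟩
  apply (hround i₁).2.2
  rw [chanStep, (hreq i₁).1, (hreq i₁).2, fairSched_f_true_true_of_lt]
  · simp [pt, hy]
  · simp [prefixOf, hx, hy]

theorem fairSched_bobViewDist_disjoint (hn : 2 ≤ n) (v : Fin n → Bool × Bool) :
    bobViewDist (traceProb (fairSched n) (alwaysA n true) (alwaysB n true)) v = 0 ∨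
      bobViewDist (traceProb (fairSched n) (alwaysA n false) (alwaysB n true)) v = 0 := by
  by_cases hv : ∀ i, (v i).2 = true
  · refine .inl <| bobViewDist_eq_zero fun t htv => by_contra fun ht => ?_
    obtain ⟨i, hi⟩ := fairSched_exists_bob_denied_of_alice_always hn ht
    simpa [← htv, bobView, viewB, hi] using hv i
  · refine .inr <| bobViewDist_eq_zero fun t htv => by_contra fun ht => hv fun i => ?_
    simpa [← htv, bobView, viewB] using fairSched_bob_served_of_alice_never ht i

/-- in the fair scheduler with `n ≥ 2` rounds, with Bob
always requesting the resource and Alice requesting always or never according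
to a uniform secret bit: under `K = 0` (never request) every
positive-probability trace gives Bob the resource (`y_i = 1`) at every round,
while under `K = 1` (always request) every positive-probability trace denies
Bob the resource (`y_i = 0`) at least once; the 𝕍-leakage of this attack is
`𝕍(Ber(1)) − 𝕍(Ber(1/2)) > 0`; hence the fair scheduler has strictly positive
classical 𝕍-capacity. -/
theorem fair_scheduler_positive_capacity
    (n : ℕ) (hn : 2 ≤ n) (𝕍 : VulnMeasure) (h𝕍 : 𝕍.Healthy) :
    (∀ t : Fin n → Bool × Bool × Bool × Bool,
        0 < traceProb (fairSched n) (alwaysA n false) (alwaysB n true) t →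
        ∀ i, (t i).2.2.2 = true) ∧
    (∀ t : Fin n → Bool × Bool × Bool × Bool,
        0 < traceProb (fairSched n) (alwaysA n true) (alwaysB n true) t →
        ∃ i, (t i).2.2.2 = false) ∧
    leakage 𝕍 (fun _ : Bool => (1 : ℝ) / 2)
        (fun k => traceProb (fairSched n) (alwaysA n k) (alwaysB n true)) =
      𝕍.V Bool (Ber 1) - 𝕍.V Bool (Ber (1 / 2)) ∧
    0 < 𝕍.V Bool (Ber 1) - 𝕍.V Bool (Ber (1 / 2)) ∧
    0 < classicalCapacity 𝕍 (fairSched n) := by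
  obtain ⟨hcomp, hmono, hbsc⟩ := h𝕍
  have hprior : IsProbVector fun _ : Bool => (1 : ℝ) / 2 :=
    ⟨fun _ => by norm_num, by norm_num [Fintype.sum_bool]⟩
  have hleak : leakage 𝕍 (fun _ : Bool => (1 : ℝ) / 2)
      (fun k => traceProb (fairSched n) (alwaysA n k) (alwaysB n true)) =
        𝕍.V Bool (Ber 1) - 𝕍.V Bool (Ber (1 / 2)) := by
    rw [leakage, bobJoint_eq, Ber_half]
    exact 𝕍.IV_eq_of_disjoint_support (𝕍.V_Ber_zero_eq_V_Ber_one hbsc) hprior.2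
      (q := fun k => bobViewDist (traceProb (fairSched n) (alwaysA n k) (alwaysB n true)))
      (fun k => (isProbVector_bobViewDist (isProbVector_traceProb _ _ _)).2)
      (fairSched_bobViewDist_disjoint hn)
  have hgap : 0 < 𝕍.V Bool (Ber 1) - 𝕍.V Bool (Ber (1 / 2)) :=
    sub_pos.2 <| hmono _ _ (by norm_num) (by norm_num) (by norm_num) le_rfl (by norm_num)
  refine ⟨fun t ht => fairSched_bob_served_of_alice_never ht.ne',
    fun t ht => fairSched_exists_bob_denied_of_alice_always hn ht.ne', hleak, hgap, ?_⟩
  exact hgap.trans_le <| hleak ▸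
    le_classicalCapacity 𝕍 hcomp (fairSched n) ⟨Bool, _, hprior⟩ (alwaysA n) (alwaysB n true)
end
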